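/- Covariance form of the per-node impurity contribution: for a split of a set of n points with responses y_i into left group L (size n_L, mean μ_L) and right group R (size n_R, mean μ_R), with parent mean μ, the quantity (n_L n_R / n)(μ_L − μ_R)² equals Σ_{i∈L} (μ_L − μ)·y_i + Σ_{i∈R} (μ_R − μ)·y_i. -/

import Mathlib

open Finset

theorem covariance_form_of_impurity (n : ℕ) (y : Fin n → ℝ) (L : Finset (Fin n))
    (hL : L.Nonempty) (hR : Lᶜ.Nonempty)
    (μL μR μ : ℝ)
    (hμL : μL = (∑ i ∈ L, y i) / L.card)
    (hμR : μR = (∑ i ∈ Lᶜ, y i) / Lᶜ.card)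
    (hμ : μ = (∑ i, y i) / n) :
    ((L.card : ℝ) * Lᶜ.card / n) * (μL - μR) ^ 2
      = ∑ i ∈ L, (μL - μ) * y i + ∑ i ∈ Lᶜ, (μR - μ) * y i := by
  have ha : (0:ℝ) < L.card := by exact_mod_cast hL.card_pos
  have hb : (0:ℝ) < Lᶜ.card := by exact_mod_cast hR.card_pos
  have hcard : (L.card : ℝ) + Lᶜ.card = n := by
    have h := L.card_add_card_compl
    rw [Fintype.card_fin] at h
    exact_mod_cast h
  have hn : (0:ℝ) < n := by linarith
  have hsum : (∑ i, y i) = ∑ i ∈ L, y i + ∑ i ∈ Lᶜ, y i :=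
    (L.sum_add_sum_compl y).symm
  have hSL : (∑ i ∈ L, y i) = μL * L.card := by
    rw [hμL]; field_simp
  have hSR : (∑ i ∈ Lᶜ, y i) = μR * Lᶜ.card := by
    rw [hμR]; rw [div_mul_cancel₀ _ hb.ne']
  simp only [← Finset.mul_sum, hSL, hSR]
  rw [hμ, hsum, hSL, hSR, ← hcard]
  generalize (Lᶜ.card : ℝ) = b at hb ⊢
  generalize (L.card : ℝ) = a at ha ⊢
  clear hcard hn hsum hSL hSR hμL hμR hμ
  have hab : a + b ≠ 0 := by positivity
  field_simp
  ring
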